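/- Under assumption (SH) and in the setting of Theorem 6.3 (finite 𝒜 = {A₁,…,A_M}, π^N = Σ_i α_i^N δ_{A_i} with α_1^N → 1 and α_i^N → 0 for i ≥ 2), define for each (s,x₀) ∈ [0,T] × ℝⁿ the feedback controls ū^N(s,x₀) := −R^{-1} B̃ᵀ P̃^N(s) (x₀,…,x₀) and ū(s,x₀) := −R^{-1} Bᵀ P(s) x₀, where P̃^N solves the augmented Riccati equation with data (Ã, B̃, Q̃^N, Q̃_f^N) and terminal value Q̃_f^N at time T, and P solves the n-dimensional Riccati equation for A₁ with terminal value Q_f. Then for every compact K ⊆ ℝⁿ, ū^N(s,x₀) → ū(s,x₀) uniformly on [0,T] × K as N → ∞. -/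

import Mathlib

open MeasureTheory Set Matrix Filter Topology

attribute [local instance] Matrix.normedAddCommGroup Matrix.normedSpace

/-- Application of a matrix to a Euclidean vector. -/
noncomputable def app {ι κ : Type*} [Fintype ι] [Fintype κ] [DecidableEq κ]
    (M : Matrix ι κ ℝ) (v : EuclideanSpace ℝ κ) : EuclideanSpace ℝ ι :=
  Matrix.toEuclideanLin M v

/-- The augmented block-diagonal state matrix `Ã = diag(A₁, …, A_M)`. -/
def augA {n M : ℕ} (A : Fin M → Matrix (Fin n) (Fin n) ℝ) :
    Matrix (Fin n × Fin M) (Fin n × Fin M) ℝ :=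
  Matrix.blockDiagonal A

/-- The augmented control matrix `B̃ = (B; …; B)`. -/
def augB {n m M : ℕ} (B : Matrix (Fin n) (Fin m) ℝ) :
    Matrix (Fin n × Fin M) (Fin m) ℝ :=
  Matrix.of fun p j => B p.1 j

/-- The augmented block-diagonal cost matrix `diag(α₁ Q, …, α_M Q)`. -/
def augQ {n M : ℕ} (α : Fin M → ℝ) (Q : Matrix (Fin n) (Fin n) ℝ) :
    Matrix (Fin n × Fin M) (Fin n × Fin M) ℝ :=
  Matrix.blockDiagonal (fun i => α i • Q)

/-- The vector `(x₀, …, x₀) ∈ ℝ^{nM}` whose `M` blocks all equal `x₀`. -/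
def bigvec {n M : ℕ} (x₀ : EuclideanSpace ℝ (Fin n)) :
    EuclideanSpace ℝ (Fin n × Fin M) :=
  WithLp.toLp 2 (fun p => x₀ p.1)

/-!
Embedded as the block `S P Sᵀ = diag(P, 0, …, 0)`, the solution `P` becomes a solution of the
augmented Riccati equation whose cost and terminal data `diag(Q, 0, …, 0)`, `diag(Q_f, 0, …, 0)` are
the limits of `Q̃ᴺ`, `Q̃_fᴺ`. The Riccati vector field is locally Lipschitz, so Grönwall's
inequality, applied on the tube of radius one around the limit trajectory and combined with a
first-exit-time argument, gives `P̃ᴺ → S P Sᵀ` uniformly on `[0, T]`. Since `B̃ᵀ S = Bᵀ` and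
`Sᵀ (x₀, …, x₀) = x₀`, the feedback laws then converge uniformly on `[0, T] × K`.
-/

open Metric
open scoped NNReal

section Gronwall

variable {E : Type*} [NormedAddCommGroup E] [NormedSpace ℝ E]

theorem dist_le_gronwallBound_of_lipschitzOnWith_closedBall {v : ℝ → E → E} {K : ℝ≥0}
    {f f' g : ℝ → E} {a b r δ ε : ℝ}
    (hv : ∀ t ∈ Ico a b, LipschitzOnWith K (v t) (closedBall (g t) r))
    (hf : ContinuousOn f (Icc a b)) (hf' : ∀ t ∈ Ico a b, HasDerivWithinAt f (f' t) (Ici t) t)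
    (f_bound : ∀ t ∈ Ico a b, dist (f' t) (v t (f t)) ≤ ε)
    (hg : ContinuousOn g (Icc a b))
    (hg' : ∀ t ∈ Ico a b, HasDerivWithinAt g (v t (g t)) (Ici t) t)
    (ha : dist (f a) (g a) ≤ δ) (hε : 0 ≤ ε) (hr : gronwallBound δ K ε (b - a) < r) :
    ∀ t ∈ Icc a b, dist (f t) (g t) ≤ gronwallBound δ K ε (t - a) := by
  have gronwall : ∀ c ≤ b, (∀ t ∈ Ico a c, dist (f t) (g t) ≤ r) →
      ∀ t ∈ Icc a c, dist (f t) (g t) ≤ gronwallBound δ K ε (t - a) := by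
    intro c hc hfg
    have hIcc : Icc a c ⊆ Icc a b := Icc_subset_Icc_right hc
    have hIco : Ico a c ⊆ Ico a b := Ico_subset_Ico_right hc
    simpa using dist_le_of_approx_trajectories_ODE_of_mem (fun t ht => hv t (hIco ht))
      (hf.mono hIcc) (fun t ht => hf' t (hIco ht)) (fun t ht => f_bound t (hIco ht))
      (fun t ht => mem_closedBall.2 (hfg t ht)) (hg.mono hIcc) (fun t ht => hg' t (hIco ht))
      (fun t _ => (dist_self _).le)
      (fun t ht => mem_closedBall_self (dist_nonneg.trans (hfg t ht))) ha
  -- at the first time `f` leaves the tube of radius `r` around `g`, Grönwall still bounds the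
  -- distance by `gronwallBound δ K ε (b - a) < r`
  have stays : ∀ t ∈ Icc a b, dist (f t) (g t) < r := by
    by_contra! hexit
    set exits := Icc a b ∩ (fun t => dist (f t) (g t)) ⁻¹' Ici r
    have hclosed : IsClosed exits :=
      (continuous_dist.comp_continuousOn (hf.prodMk hg)).preimage_isClosed_of_isClosed
        isClosed_Icc isClosed_Ici
    have hfirst : sInf exits ∈ exits := hclosed.csInf_mem hexit ⟨a, fun t ht => ht.1.1⟩
    have hbefore : ∀ t ∈ Ico a (sInf exits), dist (f t) (g t) ≤ r := fun t ht =>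
      (not_le.1 fun h => (notMem_of_lt_csInf ht.2 ⟨a, fun u hu => hu.1.1⟩)
        ⟨⟨ht.1, ht.2.le.trans hfirst.1.2⟩, h⟩).le
    have hexit_first : r ≤ dist (f (sInf exits)) (g (sInf exits)) := hfirst.2
    exact absurd ((gronwall _ hfirst.1.2 hbefore _ ⟨hfirst.1.1, le_rfl⟩).trans
      (gronwallBound_mono (dist_nonneg.trans ha) hε K.2 (sub_le_sub_right hfirst.1.2 a)))
      (not_le.2 (hr.trans_le hexit_first))
  exact gronwall b le_rfl fun t ht => (stays t (Ico_subset_Icc_self ht)).le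

theorem tendstoUniformlyOn_Icc_of_hasDerivAt_add_const [FiniteDimensional ℝ E] {F : E → E}
    (hF : LocallyLipschitz F) {ι : Type*} {l : Filter ι} {c : ι → E} {c₀ : E}
    (hc : Tendsto c l (𝓝 c₀)) {f : ι → ℝ → E} {g : ℝ → E} {a b : ℝ}
    (hf : ∀ i, ∀ t ∈ Icc a b, HasDerivAt (f i) (F (f i t) + c i) t)
    (hg : ∀ t ∈ Icc a b, HasDerivAt g (F (g t) + c₀) t)
    (ha : Tendsto (fun i => f i a) l (𝓝 (g a))) :
    TendstoUniformlyOn f g l (Icc a b) := by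
  have hgc : ContinuousOn g (Icc a b) := fun t ht => (hg t ht).continuousAt.continuousWithinAt
  obtain ⟨K, hK⟩ := hF.locallyLipschitzOn.exists_lipschitzOnWith_of_compact
    ((isCompact_Icc.image_of_continuousOn hgc).cthickening (r := 1))
  have hLip : ∀ t ∈ Ico a b, LipschitzOnWith K (fun x => F x + c₀) (closedBall (g t) 1) :=
    fun t ht x hx y hy => by
      have hball := closedBall_subset_cthickening (mem_image_of_mem g (Ico_subset_Icc_self ht)) 1
      simpa only [edist_add_right] using hK (hball hx) (hball hy)
  have hbound : Tendsto (fun i => gronwallBound (dist (f i a) (g a)) K (dist (c i) c₀) (b - a))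
      l (𝓝 0) := by
    have hcont : Continuous fun p : ℝ × ℝ => gronwallBound p.1 K p.2 (b - a) := by
      unfold gronwallBound; split_ifs <;> fun_prop
    simpa [Function.comp_def, gronwallBound_ε0_δ0] using (hcont.tendsto (0, 0)).comp
      ((tendsto_iff_dist_tendsto_zero.1 ha).prodMk_nhds (tendsto_iff_dist_tendsto_zero.1 hc))
  rw [Metric.tendstoUniformlyOn_iff]
  intro ε hε
  filter_upwards [hbound.eventually_lt_const (lt_min one_pos hε)] with i hi t ht
  rw [dist_comm]
  calc dist (f i t) (g t) ≤ gronwallBound (dist (f i a) (g a)) K (dist (c i) c₀) (t - a) :=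
        dist_le_gronwallBound_of_lipschitzOnWith_closedBall hLip
          (fun t ht => (hf i t ht).continuousAt.continuousWithinAt)
          (fun t ht => (hf i t (Ico_subset_Icc_self ht)).hasDerivWithinAt)
          (fun t _ => (dist_add_left _ _ _).le) hgc
          (fun t ht => (hg t (Ico_subset_Icc_self ht)).hasDerivWithinAt) le_rfl dist_nonneg
          (hi.trans_le (min_le_left _ _)) t ht
    _ ≤ gronwallBound (dist (f i a) (g a)) K (dist (c i) c₀) (b - a) :=
      gronwallBound_mono dist_nonneg dist_nonneg K.2 (sub_le_sub_right ht.2 a)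
    _ < ε := hi.trans_le (min_le_right _ _)

theorem tendstoUniformlyOn_Icc_of_hasDerivAt_add_const_of_right [FiniteDimensional ℝ E]
    {F : E → E} (hF : LocallyLipschitz F) {ι : Type*} {l : Filter ι} {c : ι → E} {c₀ : E}
    (hc : Tendsto c l (𝓝 c₀)) {f : ι → ℝ → E} {g : ℝ → E} {a b : ℝ}
    (hf : ∀ i, ∀ t ∈ Icc a b, HasDerivAt (f i) (F (f i t) + c i) t)
    (hg : ∀ t ∈ Icc a b, HasDerivAt g (F (g t) + c₀) t)
    (hb : Tendsto (fun i => f i b) l (𝓝 (g b))) :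
    TendstoUniformlyOn f g l (Icc a b) := by
  have hrev : ∀ {h : ℝ → E} {G : E}, (∀ t ∈ Icc a b, HasDerivAt h (F (h t) + G) t) →
      ∀ t ∈ Icc (-b) (-a), HasDerivAt (fun s => h (-s)) ((Neg.neg ∘ F) (h (-t)) + -G) t :=
    fun hh t ht => ((hh (-t) ⟨le_neg.2 ht.2, neg_le.1 ht.1⟩).scomp t (hasDerivAt_neg t)).congr_deriv
      (by simp)
  have := tendstoUniformlyOn_Icc_of_hasDerivAt_add_const
    (isometry_neg.lipschitz.locallyLipschitz.comp hF) hc.neg (fun i => hrev (hf i)) (hrev hg)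
    (by simpa using hb)
  simpa [Function.comp_def] using this.comp Neg.neg

end Gronwall

theorem ContinuousLinearMap.tendstoUniformlyOn_apply₂ {𝕜 E F G : Type*} [NontriviallyNormedField 𝕜]
    [SeminormedAddCommGroup E] [NormedSpace 𝕜 E] [SeminormedAddCommGroup F] [NormedSpace 𝕜 F]
    [SeminormedAddCommGroup G] [NormedSpace 𝕜 G] (Φ : E →L[𝕜] F →L[𝕜] G) {ι α : Type*}
    {l : Filter ι} {u : ι → α → E} {u₀ : α → E} {s : Set α} {K : Set F}
    (hu : TendstoUniformlyOn u u₀ l s) (hK : Bornology.IsBounded K) :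
    TendstoUniformlyOn (fun i p => Φ (u i p.1) p.2) (fun p => Φ (u₀ p.1) p.2) l (s ×ˢ K) := by
  obtain ⟨C, hC⟩ := hK.exists_norm_le
  rw [Metric.tendstoUniformlyOn_iff] at hu ⊢
  intro ε hε
  have hD : 0 < (‖Φ‖ + 1) * (|C| + 1) := by positivity
  filter_upwards [hu _ (div_pos hε hD)] with i hi
  rintro ⟨t, x⟩ ⟨ht, hx⟩
  calc dist (Φ (u₀ t) x) (Φ (u i t) x) = ‖Φ (u₀ t - u i t) x‖ := by
        rw [dist_eq_norm, map_sub, _root_.sub_apply]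
    _ ≤ ‖Φ‖ * ‖u₀ t - u i t‖ * ‖x‖ := Φ.le_opNorm₂ _ _
    _ ≤ (‖Φ‖ + 1) * dist (u₀ t) (u i t) * (|C| + 1) := by
        rw [← dist_eq_norm]
        gcongr
        · linarith
        · exact (hC x hx).trans ((le_abs_self C).trans (by linarith))
    _ < (‖Φ‖ + 1) * (ε / ((‖Φ‖ + 1) * (|C| + 1))) * (|C| + 1) := by
        gcongr
        exact hi t ht
    _ = ε := by field_simp

theorem tendsto_nhds_pi_single {ι β X : Type*} [DecidableEq ι] [Zero X] [TopologicalSpace X]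
    {l : Filter β} {u : β → ι → X} {i₀ : ι} {x : X} (h₁ : Tendsto (fun b => u b i₀) l (𝓝 x))
    (h₀ : ∀ i, i ≠ i₀ → Tendsto (fun b => u b i) l (𝓝 0)) :
    Tendsto u l (𝓝 (Pi.single i₀ x)) :=
  tendsto_pi_nhds.2 fun i => by
    rcases eq_or_ne i i₀ with rfl | hi
    · simpa using h₁
    · simpa [hi] using h₀ i hi

section MatrixCalculus

variable {ι κ τ ι' κ' : Type*}

@[fun_prop]
theorem ContDiff.matrix_mul [Fintype ι] [Fintype κ] [Fintype τ] {E : Type*}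
    [NormedAddCommGroup E] [NormedSpace ℝ E] {n : WithTop ℕ∞} {f : E → Matrix ι κ ℝ}
    {g : E → Matrix κ τ ℝ} (hf : ContDiff ℝ n f) (hg : ContDiff ℝ n g) :
    ContDiff ℝ n fun x => f x * g x :=
  contDiff_pi.2 fun i => contDiff_pi.2 fun j => by
    simp only [Matrix.mul_apply]
    exact ContDiff.sum fun k _ =>
      (contDiff_pi.1 (contDiff_pi.1 hf i) k).mul (contDiff_pi.1 (contDiff_pi.1 hg k) j)

theorem HasDerivAt.matrix_mul [Fintype κ] [Fintype τ] {f : ℝ → Matrix ι κ ℝ} {g : ℝ → Matrix κ τ ℝ}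
    {f' : Matrix ι κ ℝ} {g' : Matrix κ τ ℝ} {t : ℝ} (hf : HasDerivAt f f' t)
    (hg : HasDerivAt g g' t) :
    HasDerivAt (fun t => f t * g t) (f' * g t + f t * g') t :=
  hasDerivAt_pi.2 fun i => hasDerivAt_pi.2 fun j => by
    simp only [Matrix.mul_apply, Matrix.add_apply, ← Finset.sum_add_distrib]
    exact HasDerivAt.fun_sum fun k _ =>
      (hasDerivAt_pi.1 (hasDerivAt_pi.1 hf i) k).mul (hasDerivAt_pi.1 (hasDerivAt_pi.1 hg k) j)

theorem HasDerivAt.matrix_sandwich [Fintype ι] [Fintype κ] [Fintype ι'] [Fintype κ']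
    (U : Matrix ι' ι ℝ) (V : Matrix κ κ' ℝ) {f : ℝ → Matrix ι κ ℝ} {f' : Matrix ι κ ℝ} {t : ℝ}
    (hf : HasDerivAt f f' t) :
    HasDerivAt (fun t => U * f t * V) (U * f' * V) t := by
  simpa using ((hasDerivAt_const t U).matrix_mul hf).matrix_mul (hasDerivAt_const t V)

theorem TendstoUniformlyOn.matrix_sandwich [Fintype ι] [Fintype κ] [Fintype ι'] [Fintype κ']
    (U : Matrix ι' ι ℝ) (V : Matrix κ κ' ℝ) {β α : Type*} {l : Filter β} {s : Set α}
    {W : β → α → Matrix ι κ ℝ} {W₀ : α → Matrix ι κ ℝ}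
    (hW : TendstoUniformlyOn W W₀ l s) :
    TendstoUniformlyOn (fun i t => U * W i t * V) (fun t => U * W₀ t * V) l s := by
  let L : Matrix ι κ ℝ →L[ℝ] Matrix ι' κ' ℝ :=
    LinearMap.toContinuousLinearMap ((mulRightLinearMap ι' ℝ V).comp (mulLeftLinearMap κ ℝ U))
  exact L.uniformContinuous.comp_tendstoUniformlyOn hW

theorem TendstoUniformlyOn.app_prod [Fintype ι] [Fintype κ] [DecidableEq κ] {β α : Type*}
    {l : Filter β} {s : Set α} {W : β → α → Matrix ι κ ℝ} {W₀ : α → Matrix ι κ ℝ}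
    (hW : TendstoUniformlyOn W W₀ l s) {K : Set (EuclideanSpace ℝ κ)}
    (hK : Bornology.IsBounded K) :
    TendstoUniformlyOn (fun i p => app (W i p.1) p.2) (fun p => app (W₀ p.1) p.2) l (s ×ˢ K) := by
  let Φ : Matrix ι κ ℝ →L[ℝ] EuclideanSpace ℝ κ →L[ℝ] EuclideanSpace ℝ ι :=
    LinearMap.toContinuousLinearMap
      (LinearMap.toContinuousLinearMap.toLinearMap ∘ₗ (Matrix.toEuclideanLin (𝕜 := ℝ)).toLinearMap)
  exact Φ.tendstoUniformlyOn_apply₂ hW hK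

end MatrixCalculus

def riccati {ι κ : Type*} [Fintype ι] [Fintype κ] (A : Matrix ι ι ℝ) (B : Matrix ι κ ℝ)
    (R' : Matrix κ κ ℝ) (X : Matrix ι ι ℝ) : Matrix ι ι ℝ :=
  Aᵀ * X + X * A - X * B * R' * Bᵀ * X

theorem contDiff_riccati {ι κ : Type*} [Fintype ι] [Fintype κ] (A : Matrix ι ι ℝ)
    (B : Matrix ι κ ℝ) (R' : Matrix κ κ ℝ) : ContDiff ℝ 1 (riccati A B R') := by
  unfold riccati; fun_prop

section BlockInclusion

variable (ι α : Type*) {o : Type*} [DecidableEq ι] [DecidableEq o]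

def blockIncl [Zero α] [One α] (i₀ : o) : Matrix (ι × o) ι α :=
  Matrix.of fun p q => if p = (q, i₀) then 1 else 0

variable {ι α} [Fintype ι] [Fintype o] [CommSemiring α]

theorem blockDiagonal_mul_blockIncl (A : o → Matrix ι ι α) (i₀ : o) :
    blockDiagonal A * blockIncl ι α i₀ = blockIncl ι α i₀ * A i₀ := by
  ext ⟨p, i⟩ q
  by_cases h : i = i₀
  · subst h; simp [blockIncl, Matrix.mul_apply, blockDiagonal_apply]
  · simp [blockIncl, Matrix.mul_apply, blockDiagonal_apply, h]

theorem transpose_blockIncl_mul_blockDiagonal (A : o → Matrix ι ι α) (i₀ : o) :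
    (blockIncl ι α i₀)ᵀ * blockDiagonal A = A i₀ * (blockIncl ι α i₀)ᵀ := by
  have h := congrArg Matrix.transpose (blockDiagonal_mul_blockIncl (fun i => (A i)ᵀ) i₀)
  rwa [Matrix.transpose_mul, Matrix.transpose_mul, blockDiagonal_transpose,
    Matrix.transpose_transpose] at h

end BlockInclusion

section Augmentation

-- `augB B` does not determine `M`; without `(M := M)` a product with it is elaborated in
-- `CStarMatrix`.
variable {n m M : ℕ}

theorem transpose_blockIncl_mul_augB (B : Matrix (Fin n) (Fin m) ℝ) (i₀ : Fin M) :
    (blockIncl (Fin n) ℝ i₀)ᵀ * augB B (M := M) = B := by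
  ext q j
  simp [blockIncl, augB, Matrix.mul_apply]

theorem transpose_augB_mul_blockIncl (B : Matrix (Fin n) (Fin m) ℝ) (i₀ : Fin M) :
    (augB B (M := M))ᵀ * blockIncl (Fin n) ℝ i₀ = Bᵀ := by
  rw [← Matrix.transpose_transpose (blockIncl (Fin n) ℝ i₀), ← Matrix.transpose_mul,
    transpose_blockIncl_mul_augB]

theorem augQ_single (X : Matrix (Fin n) (Fin n) ℝ) (i₀ : Fin M) :
    augQ (Pi.single i₀ 1) X = blockIncl (Fin n) ℝ i₀ * X * (blockIncl (Fin n) ℝ i₀)ᵀ := by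
  ext ⟨p, i⟩ ⟨q, k⟩
  rcases eq_or_ne i i₀ with rfl | hi
  · rcases eq_or_ne k i with rfl | hk
    · simp [augQ, blockIncl, Matrix.mul_apply]
    · simp [augQ, blockIncl, Matrix.mul_apply, hk, blockDiagonal_apply_ne _ _ _ hk.symm]
  · simp [augQ, blockIncl, Matrix.mul_apply, blockDiagonal_apply, hi, Pi.single_apply]

theorem continuous_augQ (Q : Matrix (Fin n) (Fin n) ℝ) :
    Continuous fun α : Fin M → ℝ => augQ α Q :=
  Continuous.matrix_blockDiagonal (by fun_prop)

theorem app_bigvec (W : Matrix (Fin m) (Fin n × Fin M) ℝ) (x : EuclideanSpace ℝ (Fin n)) :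
    app W (bigvec x) = app (W * augB (M := M) (1 : Matrix (Fin n) (Fin n) ℝ)) x := by
  ext j
  simp [app, bigvec, augB, Matrix.mulVec, dotProduct, Matrix.one_apply, Fintype.sum_prod_type]

theorem mul_transpose_augB_mul_blockIncl_conj {k : ℕ} (W : Matrix (Fin k) (Fin m) ℝ)
    (B : Matrix (Fin n) (Fin m) ℝ) (X : Matrix (Fin n) (Fin n) ℝ) (i₀ : Fin M) :
    W * (augB B (M := M))ᵀ * (blockIncl (Fin n) ℝ i₀ * X * (blockIncl (Fin n) ℝ i₀)ᵀ)
        * augB (M := M) (1 : Matrix (Fin n) (Fin n) ℝ) = W * Bᵀ * X := by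
  calc _ = W * ((augB B (M := M))ᵀ * blockIncl (Fin n) ℝ i₀) * X
        * ((blockIncl (Fin n) ℝ i₀)ᵀ * augB (M := M) (1 : Matrix (Fin n) (Fin n) ℝ)) := by
        simp only [Matrix.mul_assoc]
    _ = W * Bᵀ * X := by
      rw [transpose_augB_mul_blockIncl, transpose_blockIncl_mul_augB, Matrix.mul_one]

theorem blockIncl_mul_riccati_mul_transpose (A : Fin M → Matrix (Fin n) (Fin n) ℝ)
    (B : Matrix (Fin n) (Fin m) ℝ) (R' : Matrix (Fin m) (Fin m) ℝ) (X : Matrix (Fin n) (Fin n) ℝ)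
    (i₀ : Fin M) :
    blockIncl (Fin n) ℝ i₀ * riccati (A i₀) B R' X * (blockIncl (Fin n) ℝ i₀)ᵀ =
      riccati (augA A) (augB B) R'
        (blockIncl (Fin n) ℝ i₀ * X * (blockIncl (Fin n) ℝ i₀)ᵀ) := by
  set S := blockIncl (Fin n) ℝ i₀
  have hA : ∀ Y : Matrix (Fin n) (Fin n × Fin M) ℝ, (augA A)ᵀ * (S * Y) = S * ((A i₀)ᵀ * Y) := by
    intro Y
    rw [← Matrix.mul_assoc, augA, blockDiagonal_transpose, blockDiagonal_mul_blockIncl,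
      Matrix.mul_assoc]
  have hA' : Sᵀ * augA A = A i₀ * Sᵀ := transpose_blockIncl_mul_blockDiagonal A i₀
  have hB : ∀ Y : Matrix (Fin m) (Fin n × Fin M) ℝ, Sᵀ * (augB B (M := M) * Y) = B * Y := by
    intro Y; rw [← Matrix.mul_assoc, transpose_blockIncl_mul_augB]
  have hB' : ∀ Y : Matrix (Fin n) (Fin n × Fin M) ℝ, (augB B (M := M))ᵀ * (S * Y) = Bᵀ * Y := by
    intro Y; rw [← Matrix.mul_assoc, transpose_augB_mul_blockIncl]
  simp only [riccati, Matrix.mul_add, Matrix.add_mul, Matrix.mul_sub, Matrix.sub_mul,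
    Matrix.mul_assoc, hA, hA', hB, hB']

end Augmentation

theorem stmt_17_general {n m M : ℕ} (hM : 0 < M) (T : ℝ)
    (B : Matrix (Fin n) (Fin m) ℝ)
    (Q Qf : Matrix (Fin n) (Fin n) ℝ) (R : Matrix (Fin m) (Fin m) ℝ)
    (A : Fin M → Matrix (Fin n) (Fin n) ℝ)
    (α : ℕ → Fin M → ℝ)
    -- `α₁ᴺ → 1` and `αᵢᴺ → 0` for `i = 2, …, M`
    (hconv1 : Tendsto (fun N => α N ⟨0, hM⟩) atTop (𝓝 1))
    (hconv0 : ∀ i : Fin M, i ≠ ⟨0, hM⟩ → Tendsto (fun N => α N i) atTop (𝓝 0))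
    -- the solutions of the augmented Riccati equations on `[0,T]`
    (PN : ℕ → ℝ → Matrix (Fin n × Fin M) (Fin n × Fin M) ℝ)
    (hPN : ∀ N, ∀ t ∈ Set.Icc (0 : ℝ) T,
      HasDerivAt (PN N)
        (-((augA A)ᵀ * PN N t + PN N t * augA A
            - PN N t * augB B (M := M) * R⁻¹ * (augB B (M := M))ᵀ * PN N t
            + augQ (α N) Q)) t)
    (hPNT : ∀ N, PN N T = augQ (α N) Qf)
    -- the solution of the `n`-dimensional Riccati equation for `A₁` on `[0,T]`
    (P : ℝ → Matrix (Fin n) (Fin n) ℝ)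
    (hP : ∀ t ∈ Set.Icc (0 : ℝ) T,
      HasDerivAt P (-((A ⟨0, hM⟩)ᵀ * P t + P t * A ⟨0, hM⟩
            - P t * B * R⁻¹ * Bᵀ * P t + Q)) t)
    (hPT : P T = Qf) :
    -- the feedback controls `ūᴺ(s,x₀) = −R⁻¹ B̃ᵀ P̃ᴺ(s) (x₀,…,x₀)` converge uniformly on
    -- `[0,T] × K` to `ū(s,x₀) = −R⁻¹ Bᵀ P(s) x₀`, for every compact `K`
    ∀ K : Set (EuclideanSpace ℝ (Fin n)), IsCompact K →
      TendstoUniformlyOn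
        (fun (N : ℕ) (q : ℝ × EuclideanSpace ℝ (Fin n)) =>
          -(app (R⁻¹ * (augB B (M := M))ᵀ * PN N q.1) (bigvec (M := M) q.2)))
        (fun q => -(app (R⁻¹ * Bᵀ * P q.1) q.2))
        atTop (Set.Icc (0 : ℝ) T ×ˢ K) := by
  intro K hK
  set i₀ : Fin M := ⟨0, hM⟩
  set S := blockIncl (Fin n) ℝ i₀
  have hcost : ∀ C : Matrix (Fin n) (Fin n) ℝ,
      Tendsto (fun N => augQ (α N) C) atTop (𝓝 (S * C * Sᵀ)) := fun C => by
    rw [← augQ_single]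
    exact ((continuous_augQ C).tendsto _).comp (tendsto_nhds_pi_single hconv1 hconv0)
  have hPN_lim : TendstoUniformlyOn PN (fun t => S * P t * Sᵀ) atTop (Icc 0 T) :=
    tendstoUniformlyOn_Icc_of_hasDerivAt_add_const_of_right
      (contDiff_riccati (augA A) (augB B) R⁻¹).neg.locallyLipschitz (hcost Q).neg
      (fun N t ht => (hPN N t ht).congr_deriv (neg_add _ _))
      (fun t ht => ((hP t ht).matrix_sandwich S Sᵀ).congr_deriv <| by
        rw [Matrix.mul_neg, Matrix.neg_mul, Matrix.mul_add, Matrix.add_mul, ← riccati,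
          blockIncl_mul_riccati_mul_transpose, neg_add])
      (by simp only [hPNT, hPT]; exact hcost Qf)
  have hgain : TendstoUniformlyOn
      (fun N t => R⁻¹ * (augB B (M := M))ᵀ * PN N t * augB (M := M) (1 : Matrix (Fin n) (Fin n) ℝ))
      (fun t => R⁻¹ * Bᵀ * P t) atTop (Icc 0 T) :=
    (hPN_lim.matrix_sandwich _ _).congr_right fun t _ =>
      mul_transpose_augB_mul_blockIncl_conj R⁻¹ B (P t) i₀
  simpa only [app_bigvec, Pi.neg_def] using (hgain.app_prod hK.isBounded).neg

theorem stmt_17 {n m M : ℕ} (hM : 0 < M) (T : ℝ) (hT : 0 < T)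
    (B : Matrix (Fin n) (Fin m) ℝ)
    (Q Qf : Matrix (Fin n) (Fin n) ℝ) (R : Matrix (Fin m) (Fin m) ℝ)
    (hQ : Q.PosSemidef) (hQf : Qf.PosSemidef) (hR : R.PosDef)
    (A : Fin M → Matrix (Fin n) (Fin n) ℝ)
    (α : ℕ → Fin M → ℝ) (hα0 : ∀ N i, 0 ≤ α N i) (hα1 : ∀ N, ∑ i, α N i = 1)
    -- `α₁ᴺ → 1` and `αᵢᴺ → 0` for `i = 2, …, M`
    (hconv1 : Tendsto (fun N => α N ⟨0, hM⟩) atTop (𝓝 1))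
    (hconv0 : ∀ i : Fin M, i ≠ ⟨0, hM⟩ → Tendsto (fun N => α N i) atTop (𝓝 0))
    -- the solutions of the augmented Riccati equations on `[0,T]`
    (PN : ℕ → ℝ → Matrix (Fin n × Fin M) (Fin n × Fin M) ℝ)
    (hPN : ∀ N, ∀ t ∈ Set.Icc (0 : ℝ) T,
      HasDerivAt (PN N)
        (-((augA A)ᵀ * PN N t + PN N t * augA A
            - PN N t * augB B (M := M) * R⁻¹ * (augB B (M := M))ᵀ * PN N t
            + augQ (α N) Q)) t)
    (hPNT : ∀ N, PN N T = augQ (α N) Qf)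
    -- the solution of the `n`-dimensional Riccati equation for `A₁` on `[0,T]`
    (P : ℝ → Matrix (Fin n) (Fin n) ℝ)
    (hP : ∀ t ∈ Set.Icc (0 : ℝ) T,
      HasDerivAt P (-((A ⟨0, hM⟩)ᵀ * P t + P t * A ⟨0, hM⟩
            - P t * B * R⁻¹ * Bᵀ * P t + Q)) t)
    (hPT : P T = Qf) :
    -- the feedback controls `ūᴺ(s,x₀) = −R⁻¹ B̃ᵀ P̃ᴺ(s) (x₀,…,x₀)` converge uniformly on
    -- `[0,T] × K` to `ū(s,x₀) = −R⁻¹ Bᵀ P(s) x₀`, for every compact `K`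
    ∀ K : Set (EuclideanSpace ℝ (Fin n)), IsCompact K →
      TendstoUniformlyOn
        (fun (N : ℕ) (q : ℝ × EuclideanSpace ℝ (Fin n)) =>
          -(app (R⁻¹ * (augB B (M := M))ᵀ * PN N q.1) (bigvec (M := M) q.2)))
        (fun q => -(app (R⁻¹ * Bᵀ * P q.1) q.2))
        atTop (Set.Icc (0 : ℝ) T ×ˢ K) :=
  stmt_17_general hM T B Q Qf R A α hconv1 hconv0 PN hPN hPNT P hP hPT
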